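/- (Elliptical potential bound) Let x₁,...,x_T ∈ ℝ^d with ‖x_t‖₂ ≤ B for all t, fix σ ≥ B², and define Σ_t = Σ_{τ=1}^t x_τ x_τᵀ + σ I for t ∈ {0,1,...,T} (with Σ₀ = σI). Then Σ_{t=1}^T ‖x_t‖_{Σ_{t−1}^{-1}} ≤ sqrt( 2 d T log(1 + T B² / (σ d)) ), where ‖x‖_A = sqrt(xᵀ A x). -/

import Mathlib

/-!
Write `q_t = x_tᵀ Σ_{t-1}⁻¹ x_t`. By the matrix determinant lemma
`det Σ_t = det Σ_{t-1} · (1 + q_t)`, so `∏ (1 + q_t) = det Σ_T / σ^d`, and AM–GM on the eigenvalues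
of `Σ_T` bounds `det Σ_T ≤ (tr Σ_T / d)^d ≤ (σ + T B² / d)^d`. Since `Σ_{t-1} ⪰ σ I` and
`‖x_t‖² ≤ B² ≤ σ`, each `q_t ≤ 1`, and on `[0, 1]` we have `u ≤ 2 log (1 + u)`; hence
`∑ q_t ≤ 2 d log (1 + T B² / (σ d))`, and Cauchy–Schwarz `∑ √q_t ≤ √(T ∑ q_t)` concludes.
-/

open Matrix Finset

theorem Real.prod_le_sum_div_card_pow {ι : Type*} [Fintype ι] (z : ι → ℝ) (hz : ∀ i, 0 ≤ z i) :
    ∏ i, z i ≤ ((∑ i, z i) / Fintype.card ι) ^ Fintype.card ι := by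
  rcases isEmpty_or_nonempty ι with _ | _
  · simp
  have hprod : 0 ≤ ∏ i, z i := prod_nonneg fun i _ => hz i
  have hgm := Real.geom_mean_le_arith_mean univ (fun _ => 1) z (by simp)
    (by simp [Fintype.card_pos]) (fun i _ => hz i)
  simp only [Real.rpow_one, sum_const, card_univ, nsmul_eq_mul, mul_one, one_mul] at hgm
  calc ∏ i, z i = ((∏ i, z i) ^ (Fintype.card ι : ℝ)⁻¹) ^ Fintype.card ι :=
        (Real.rpow_inv_natCast_pow hprod Fintype.card_ne_zero).symm
    _ ≤ _ := by gcongr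

theorem Real.sum_sqrt_le_sqrt_card_mul_sum {ι : Type*} (s : Finset ι) {f : ι → ℝ}
    (hf : ∀ i, 0 ≤ f i) : ∑ i ∈ s, √(f i) ≤ √(#s * ∑ i ∈ s, f i) := by
  refine Real.le_sqrt_of_sq_le ?_
  simpa only [Real.sq_sqrt (hf _)] using sq_sum_le_card_mul_sum_sq (s := s) (f := fun i => √(f i))

theorem Real.le_two_mul_log_one_add {u : ℝ} (h0 : 0 ≤ u) (h2 : u ≤ 2) :
    u ≤ 2 * Real.log (1 + u) := by
  have h := Real.le_log_one_add_of_nonneg h0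
  rw [div_le_iff₀ (by linarith)] at h
  nlinarith

namespace Matrix

variable {n : Type*} [Fintype n] [DecidableEq n]

theorem PosSemidef.det_le_trace_div_card_pow {A : Matrix n n ℝ} (hA : A.PosSemidef) :
    A.det ≤ (A.trace / Fintype.card n) ^ Fintype.card n := by
  rw [hA.isHermitian.det_eq_prod_eigenvalues, hA.isHermitian.trace_eq_sum_eigenvalues]
  simpa using Real.prod_le_sum_div_card_pow _ hA.eigenvalues_nonneg

theorem det_add_vecMulVec {R : Type*} [CommRing R] {A : Matrix n n R} (hA : IsUnit A.det)
    (u v : n → R) : (A + vecMulVec u v).det = A.det * (1 + v ⬝ᵥ A⁻¹ *ᵥ u) := by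
  rw [vecMulVec_eq Unit, det_add_replicateCol_mul_replicateRow hA, Matrix.mul_assoc,
    ← replicateCol_mulVec, replicateRow_mul_replicateCol, det_unique (1 + _)]
  rfl

theorem PosSemidef.mul_dotProduct_add_smul_one_inv_mulVec_le {P : Matrix n n ℝ}
    (hP : P.PosSemidef) {σ : ℝ} (hσ : 0 < σ) (u : n → ℝ) :
    σ * (u ⬝ᵥ (P + σ • 1)⁻¹ *ᵥ u) ≤ u ⬝ᵥ u := by
  have hA : (P + σ • 1).PosDef := PosDef.posSemidef_add hP (PosDef.one.smul hσ)
  set y := (P + σ • 1)⁻¹ *ᵥ u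
  have hq : 0 ≤ u ⬝ᵥ y := by simpa using hA.posSemidef.inv.dotProduct_mulVec_nonneg u
  have hσy : σ * (y ⬝ᵥ y) ≤ u ⬝ᵥ y := by
    have hAy : (P + σ • 1) *ᵥ y = u := by
      rw [mulVec_mulVec, mul_nonsing_inv _ ((isUnit_iff_isUnit_det _).mp hA.isUnit), one_mulVec]
    have hPy : 0 ≤ P *ᵥ y ⬝ᵥ y := by
      simpa [dotProduct_comm] using hP.dotProduct_mulVec_nonneg y
    nth_rewrite 1 [← hAy]
    rw [add_mulVec, add_dotProduct, smul_mulVec, one_mulVec, smul_dotProduct, smul_eq_mul]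
    linarith
  have hcs : (u ⬝ᵥ y) ^ 2 ≤ (u ⬝ᵥ u) * (y ⬝ᵥ y) := by
    simpa only [dotProduct, sq] using sum_mul_sq_le_sq_mul_sq univ u y
  have huu : 0 ≤ u ⬝ᵥ u := by simpa using dotProduct_star_self_nonneg u
  nlinarith [mul_le_mul_of_nonneg_left hcs hσ.le, mul_le_mul_of_nonneg_left hσy huu]

end Matrix

theorem Matrix.posSemidef_sum_vecMulVec_self {n ι : Type*} [Fintype n] (s : Finset ι)
    (x : ι → n → ℝ) : (∑ τ ∈ s, vecMulVec (x τ) (x τ)).PosSemidef :=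
  posSemidef_sum _ fun τ _ => by simpa using posSemidef_vecMulVec_self_star (x τ)

section RegularizedGram

variable {n : Type*} [DecidableEq n] {σ : ℝ} (x : ℕ → n → ℝ)

variable (σ) in
-- Indices start at `0`: the paper's `Σ_{t-1}`, which weights its `x_t`, is `regularizedGram σ x t`.
def regularizedGram (t : ℕ) : Matrix n n ℝ :=
  ∑ τ ∈ range t, vecMulVec (x τ) (x τ) + σ • 1

theorem regularizedGram_succ (t : ℕ) :
    regularizedGram σ x (t + 1) = regularizedGram σ x t + vecMulVec (x t) (x t) := by
  simp only [regularizedGram, sum_range_succ]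
  abel

variable [Fintype n]

theorem regularizedGram_posDef (hσ : 0 < σ) (t : ℕ) : (regularizedGram σ x t).PosDef :=
  PosDef.posSemidef_add (posSemidef_sum_vecMulVec_self _ x) (PosDef.one.smul hσ)

theorem trace_regularizedGram (t : ℕ) :
    (regularizedGram σ x t).trace = ∑ τ ∈ range t, x τ ⬝ᵥ x τ + σ * Fintype.card n := by
  simp [regularizedGram, trace_sum, trace_vecMulVec]

theorem det_regularizedGram (hσ : 0 < σ) (t : ℕ) :
    (regularizedGram σ x t).det =
      σ ^ Fintype.card n * ∏ τ ∈ range t, (1 + x τ ⬝ᵥ (regularizedGram σ x τ)⁻¹ *ᵥ x τ) := by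
  induction t with
  | zero => simp [regularizedGram]
  | succ t ih =>
    rw [regularizedGram_succ, det_add_vecMulVec (regularizedGram_posDef x hσ t).det_pos.ne'.isUnit,
      ih, prod_range_succ, mul_assoc]

theorem dotProduct_regularizedGram_inv_mulVec_nonneg (hσ : 0 < σ) (t : ℕ) (u : n → ℝ) :
    0 ≤ u ⬝ᵥ (regularizedGram σ x t)⁻¹ *ᵥ u := by
  simpa using (regularizedGram_posDef x hσ t).posSemidef.inv.dotProduct_mulVec_nonneg u

theorem mul_dotProduct_regularizedGram_inv_mulVec_le (hσ : 0 < σ) (t : ℕ) (u : n → ℝ) :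
    σ * (u ⬝ᵥ (regularizedGram σ x t)⁻¹ *ᵥ u) ≤ u ⬝ᵥ u :=
  (posSemidef_sum_vecMulVec_self _ x).mul_dotProduct_add_smul_one_inv_mulVec_le hσ u

theorem prod_one_add_potential_le [Nonempty n] (hσ : 0 < σ) (T : ℕ) :
    ∏ t ∈ range T, (1 + x t ⬝ᵥ (regularizedGram σ x t)⁻¹ *ᵥ x t) ≤
      (1 + (∑ t ∈ range T, x t ⬝ᵥ x t) / (σ * Fintype.card n)) ^ Fintype.card n := by
  have hd : (0 : ℝ) < Fintype.card n := by exact_mod_cast Fintype.card_pos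
  refine le_of_mul_le_mul_left ?_ (pow_pos hσ (Fintype.card n))
  rw [← det_regularizedGram x hσ, ← mul_pow]
  calc (regularizedGram σ x T).det
      ≤ ((regularizedGram σ x T).trace / Fintype.card n) ^ Fintype.card n :=
        (regularizedGram_posDef x hσ T).posSemidef.det_le_trace_div_card_pow
    _ = _ := by
      rw [trace_regularizedGram]
      field_simp
      ring

theorem sum_potential_le [Nonempty n] (hσ : 0 < σ) {T : ℕ} {L : ℝ}
    (hL : ∀ t < T, x t ⬝ᵥ x t ≤ L) (hLσ : L ≤ σ) :
    ∑ t ∈ range T, x t ⬝ᵥ (regularizedGram σ x t)⁻¹ *ᵥ x t ≤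
      2 * Fintype.card n * Real.log (1 + T * L / (σ * Fintype.card n)) := by
  set q := fun t => x t ⬝ᵥ (regularizedGram σ x t)⁻¹ *ᵥ x t
  have hq0 : ∀ t, 0 ≤ q t := fun t => dotProduct_regularizedGram_inv_mulVec_nonneg x hσ t (x t)
  have hq1 : ∀ t < T, q t ≤ 1 := fun t ht => by
    have := mul_dotProduct_regularizedGram_inv_mulVec_le x hσ t (x t)
    exact (mul_le_iff_le_one_right hσ).mp (by linarith [hL t ht])
  have hsum_nonneg : 0 ≤ ∑ t ∈ range T, x t ⬝ᵥ x t :=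
    sum_nonneg fun t _ => by simpa using dotProduct_star_self_nonneg (x t)
  have hsum : ∑ t ∈ range T, x t ⬝ᵥ x t ≤ T * L := by
    simpa using sum_le_sum fun t ht => hL t (mem_range.mp ht)
  calc ∑ t ∈ range T, q t
      ≤ ∑ t ∈ range T, 2 * Real.log (1 + q t) := sum_le_sum fun t ht =>
        Real.le_two_mul_log_one_add (hq0 t) (by linarith [hq1 t (mem_range.mp ht)])
    _ = 2 * Real.log (∏ t ∈ range T, (1 + q t)) := by
      rw [← mul_sum, Real.log_prod fun t _ => by linarith [hq0 t]]
    _ ≤ 2 * Real.log ((1 + T * L / (σ * Fintype.card n)) ^ Fintype.card n) := by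
      gcongr
      · exact prod_pos fun t _ => by linarith [hq0 t]
      · exact (prod_one_add_potential_le x hσ T).trans
          (pow_le_pow_left₀ (by positivity) (by gcongr) _)
    _ = 2 * Fintype.card n * Real.log (1 + T * L / (σ * Fintype.card n)) := by
      rw [Real.log_pow]; ring

end RegularizedGram

open Matrix in
theorem stmt_12 (d T : ℕ) (hd : 0 < d) (x : ℕ → Fin d → ℝ) (B σ : ℝ) (hB : 0 < B)
    (hx : ∀ t < T, Real.sqrt (∑ i, x t i ^ 2) ≤ B) (hσ : B ^ 2 ≤ σ) :
    ∑ t ∈ Finset.range T,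
        Real.sqrt (x t ⬝ᵥ
          ((((∑ τ ∈ Finset.range t, Matrix.vecMulVec (x τ) (x τ)) +
              σ • (1 : Matrix (Fin d) (Fin d) ℝ))⁻¹) *ᵥ x t)) ≤
      Real.sqrt (2 * d * T * Real.log (1 + T * B ^ 2 / (σ * d))) := by
  have : Nonempty (Fin d) := Fin.pos_iff_nonempty.mp hd
  have hσ0 : 0 < σ := (pow_pos hB 2).trans_le hσ
  have hxB : ∀ t < T, x t ⬝ᵥ x t ≤ B ^ 2 := fun t ht => by
    simpa [dotProduct, sq] using (Real.sqrt_le_left hB.le).mp (hx t ht)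
  change ∑ t ∈ range T, √(x t ⬝ᵥ (regularizedGram σ x t)⁻¹ *ᵥ x t) ≤ _
  calc ∑ t ∈ range T, √(x t ⬝ᵥ (regularizedGram σ x t)⁻¹ *ᵥ x t)
      ≤ √(T * ∑ t ∈ range T, x t ⬝ᵥ (regularizedGram σ x t)⁻¹ *ᵥ x t) := by
        simpa using Real.sum_sqrt_le_sqrt_card_mul_sum (range T)
          fun t => dotProduct_regularizedGram_inv_mulVec_nonneg x hσ0 t (x t)
    _ ≤ √(T * (2 * d * Real.log (1 + T * B ^ 2 / (σ * d)))) := by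
        gcongr
        simpa using sum_potential_le x hσ0 hxB hσ
    _ = √(2 * d * T * Real.log (1 + T * B ^ 2 / (σ * d))) := by ring_nf
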